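/- arXiv:2203.02917 — 2 statements merged into one kernel-verified Lean document; each statement's English description precedes it below -/
import Mathlib

section
/- Occurrences of the factors 01 and 10 in the Thue-Morse word strictly alternate: between any two consecutive positions where 01 occurs, there is exactly one position where 10 occurs, and vice versa. -/
open scoped Classical

/-- The Thue-Morse word: parity of the binary digit sum. -/
def tm (n : ℕ) : ℕ := (Nat.digits 2 n).sum % 2

/-- `t[j..j+n-1] = t[i..i+n-1]` : an occurrence at `j` of the factor `t[i..i+n-1]`. -/
def feq (i j n : ℕ) : Prop := ∀ k < n, tm (j + k) = tm (i + k)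

/-- `t[j..j+n-1]` is the binary complement of `t[i..i+n-1]`. -/
def feqc (i j n : ℕ) : Prop := ∀ k < n, tm (j + k) = 1 - tm (i + k)

/-- Positions of occurrences of `x = t[i..i+n-1]` or its complement. -/
def occSet (i n : ℕ) : ℕ → Prop := fun j => feq i j n ∨ feqc i j n

/-- The intertwining sequence of `x = t[i..i+n-1]`: at index `m`, the label of the
`m`-th (in increasing order of position) occurrence of `x` or its complement;
`0` codes `A` (an occurrence of `x`), `1` codes `B` (an occurrence of the complement). -/
noncomputable def itw (i n m : ℕ) : ℕ :=
  if feq i (Nat.nth (occSet i n) m) n then 0 else 1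

/-- The intertwining sequence is `(AB)^ω`. -/
def ABpat (i n : ℕ) : Prop := ∀ m, itw i n m = m % 2

/-- The intertwining sequence is `(BA)^ω`. -/
def BApat (i n : ℕ) : Prop := ∀ m, itw i n m = (m + 1) % 2

/-- The intertwining sequence is `(ABBA)^ω`. -/
def ABBApat (i n : ℕ) : Prop :=
  ∀ m, itw i n m = if m % 4 = 0 ∨ m % 4 = 3 then 0 else 1

/-- The intertwining sequence is `(BAAB)^ω`. -/
def BAABpat (i n : ℕ) : Prop :=
  ∀ m, itw i n m = if m % 4 = 0 ∨ m % 4 = 3 then 1 else 0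

/-- The length-`n` factor of the Thue-Morse word starting at position `i`, as a word. -/
def fac (i n : ℕ) : List ℕ := (List.range n).map (fun k => tm (i + k))

def occ01 (i : ℕ) : Prop := tm i = 0 ∧ tm (i + 1) = 1

def occ10 (i : ℕ) : Prop := tm i = 1 ∧ tm (i + 1) = 0

/-! Only the fact that the word is binary matters. Between an occurrence of `01` at `i` and the
next one at `j`, the word reads `1` at `i + 1` and `0` at `j`, so it must switch from `1` to `0`
somewhere in between; two such switches would enclose a switch from `0` to `1`, i.e. an occurrence
of `01` strictly between `i` and `j`. -/

section Steps

variable {α : Type*} (f : ℕ → α)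

theorem exists_change_of_lt_of_ne {a b : ℕ} (hab : a < b) (hne : f a ≠ f b) :
    ∃ k, a ≤ k ∧ k < b ∧ f k = f a ∧ f (k + 1) ≠ f a := by
  induction b with
  | zero => omega
  | succ b ih =>
    by_cases hb : f b = f a
    · exact ⟨b, by omega, b.lt_add_one, hb, hne.symm⟩
    · have hab' : a < b := (Nat.le_of_lt_succ hab).lt_of_ne fun e => hb (e ▸ rfl)
      obtain ⟨k, hak, hkb, hk, hk'⟩ := ih hab' (Ne.symm hb)
      exact ⟨k, hak, hkb.trans b.lt_add_one, hk, hk'⟩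

def IsStep (p q : α) (i : ℕ) : Prop := f i = p ∧ f (i + 1) = q

variable {f} {p q : α}

theorem exists_isStep_between (hpq : p ≠ q) (hf : ∀ n, f n = p ∨ f n = q) {i j : ℕ}
    (hij : i < j) (hi : f (i + 1) = q) (hj : f j = p) :
    ∃ k, i < k ∧ k < j ∧ IsStep f q p k := by
  have hne : f (i + 1) ≠ f j := by rw [hi, hj]; exact hpq.symm
  have hij' : i + 1 < j := (Nat.succ_le_of_lt hij).lt_of_ne fun e => hne (e ▸ rfl)
  obtain ⟨k, hik, hkj, hk, hk'⟩ := exists_change_of_lt_of_ne f hij' hne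
  rw [hi] at hk hk'
  exact ⟨k, by omega, hkj, hk, (hf (k + 1)).resolve_right hk'⟩

theorem existsUnique_isStep_between_consecutive (hpq : p ≠ q) (hf : ∀ n, f n = p ∨ f n = q)
    {i j : ℕ} (hij : i < j) (hi : IsStep f p q i) (hj : IsStep f p q j)
    (hconsec : ∀ l, i < l → l < j → ¬ IsStep f p q l) :
    ∃! k, i < k ∧ k < j ∧ IsStep f q p k := by
  obtain ⟨k, hik, hkj, hk⟩ := exists_isStep_between hpq hf hij hi.2 hj.1
  refine ⟨k, ⟨hik, hkj, hk⟩, ?_⟩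
  have hf' : ∀ n, f n = q ∨ f n = p := fun n => (hf n).symm
  have no_two : ∀ m m', i < m → m < m' → m' < j → IsStep f q p m → ¬ IsStep f q p m' :=
    fun m m' him hmm' hm'j hm hm' => by
      obtain ⟨l, hml, hlm', hl⟩ := exists_isStep_between hpq.symm hf' hmm' hm.2 hm'.1
      exact hconsec l (by omega) (by omega) hl
  rintro k' ⟨hik', hk'j, hk'⟩
  rcases lt_trichotomy k' k with hlt | heq | hgt
  · exact absurd hk (no_two k' k hik' hlt hkj hk')
  · exact heq
  · exact absurd hk' (no_two k k' hik hgt hk'j hk)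

end Steps

theorem tm_eq_zero_or_one (n : ℕ) : tm n = 0 ∨ tm n = 1 := Nat.mod_two_eq_zero_or_one _

/-- Occurrences of 01 and 10 in the Thue-Morse word strictly alternate:
between consecutive occurrences of 01 there is exactly one occurrence of 10,
and vice versa. -/
theorem tm_01_10_alternate :
    (∀ i j, i < j → occ01 i → occ01 j → (∀ l, i < l → l < j → ¬ occ01 l) →
      ∃! k, i < k ∧ k < j ∧ occ10 k) ∧
    (∀ i j, i < j → occ10 i → occ10 j → (∀ l, i < l → l < j → ¬ occ10 l) →
      ∃! k, i < k ∧ k < j ∧ occ01 k) :=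
  ⟨fun _ _ hij hi hj hconsec =>
    existsUnique_isStep_between_consecutive zero_ne_one tm_eq_zero_or_one hij hi hj hconsec,
   fun _ _ hij hi hj hconsec =>
    existsUnique_isStep_between_consecutive one_ne_zero (fun n => (tm_eq_zero_or_one n).symm)
      hij hi hj hconsec⟩
end

section
/- For any factor x of the Thue-Morse word t of length n ≥ 2, if j < k are positions of two consecutive occurrences of words from {x, x̄} (meaning t[j..j+n-1] ∈ {x,x̄}, t[k..k+n-1] ∈ {x,x̄}, and no position strictly between j and k is an occurrence of x or x̄), then exactly one of t[j..j+n-1], t[k..k+n-1] equals x and the other equals x̄, OR the intertwining sequence of x has the pattern (ABBA)^ω or (BAAB)^ω. Equivalently: the intertwining sequence of x is one of (AB)^ω, (BA)^ω, (ABBA)^ω, (BAAB)^ω. -/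
open scoped Classical

lemma tm_le (n : ℕ) : tm n ≤ 1 := Nat.lt_succ_iff.mp (Nat.mod_lt _ (by norm_num))

lemma tm_two_mul (n : ℕ) : tm (2 * n) = tm n := by
  rcases Nat.eq_zero_or_pos n with h | h
  · simp [h]
  · unfold tm
    rw [Nat.digits_def' (by norm_num : 1 < 2) (by omega)]
    simp [Nat.mul_div_cancel_left _ (by norm_num : 0 < 2), Nat.mul_mod_right]

lemma tm_two_mul_add_one (n : ℕ) : tm (2 * n + 1) = 1 - tm n := by
  unfold tm
  rw [Nat.digits_def' (by norm_num : 1 < 2) (by omega)]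
  have h1 : (2 * n + 1) % 2 = 1 := by omega
  have h2 : (2 * n + 1) / 2 = n := by omega
  rw [h1, h2]
  simp only [List.sum_cons]
  omega

/-- difference (period-doubling-like) sequence -/
def pd (n : ℕ) : ℕ := (tm n + tm (n + 1)) % 2

lemma pd_le (n : ℕ) : pd n ≤ 1 := Nat.lt_succ_iff.mp (Nat.mod_lt _ (by norm_num))

lemma pd_two_mul (n : ℕ) : pd (2 * n) = 1 := by
  have h1 := tm_two_mul n
  have h2 := tm_two_mul_add_one n
  have h3 := tm_le n
  unfold pd
  omega

lemma pd_two_mul_add_one (n : ℕ) : pd (2 * n + 1) = 1 - pd n := by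
  have h1 := tm_two_mul_add_one n
  have h2 : (2 * n + 1) + 1 = 2 * (n + 1) := by ring
  have h3 := tm_two_mul (n + 1)
  have h4 := tm_le n
  have h5 := tm_le (n + 1)
  unfold pd
  rw [h2, h3, h1]
  unfold tm
  omega

lemma pd_eq_one_of_even {n : ℕ} (h : n % 2 = 0) : pd n = 1 := by
  obtain ⟨m, rfl⟩ : ∃ m, n = 2 * m := ⟨n / 2, by omega⟩
  exact pd_two_mul m

lemma odd_of_pd_eq_zero {n : ℕ} (h : pd n = 0) : n % 2 = 1 := by
  by_contra hc
  have := pd_eq_one_of_even (by omega : n % 2 = 0)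
  omega

/-- tm successor from pd -/
lemma tm_succ (n : ℕ) : tm (n + 1) = (tm n + pd n) % 2 := by
  have h1 := tm_le n
  have h2 := tm_le (n + 1)
  unfold pd
  omega

/-- no two consecutive zeros in pd -/
lemma pd_no_two_zeros (n : ℕ) : ¬(pd n = 0 ∧ pd (n + 1) = 0) := by
  rintro ⟨h1, h2⟩
  have o1 := odd_of_pd_eq_zero h1
  have o2 := odd_of_pd_eq_zero h2
  omega

/-- Uniqueness of the monotone enumeration. -/
lemma nth_unique (p : ℕ → Prop) (g : ℕ → ℕ) (hg : StrictMono g)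
    (hmem : ∀ m, p (g m)) (hsurj : ∀ x, p x → ∃ m, g m = x) :
    (∀ m, Nat.nth p m = g m) ∧ (setOf p).Infinite := by
  have hinf : (setOf p).Infinite :=
    Set.infinite_of_injective_forall_mem (f := g) hg.injective hmem
  refine ⟨?_, hinf⟩
  intro m
  induction m using Nat.strong_induction_on with
  | _ m ih =>
    rw [Nat.nth_eq_sInf]
    apply le_antisymm
    · apply Nat.sInf_le
      refine ⟨hmem m, fun k hk => ?_⟩
      rw [ih k hk]
      exact hg hk
    · have hne : {x | p x ∧ ∀ k < m, Nat.nth p k < x}.Nonempty := by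
        refine ⟨g m, hmem m, fun k hk => ?_⟩
        rw [ih k hk]; exact hg hk
      obtain ⟨hx, hlt⟩ := Nat.sInf_mem hne
      obtain ⟨m', hm'⟩ := hsurj _ hx
      have hle : m ≤ m' := by
        by_contra hc
        push_neg at hc
        have h2 := hlt m' hc
        rw [ih m' hc, hm'] at h2
        omega
      rw [← hm']
      exact hg.monotone hle

/-- the four good label patterns -/
def Good (L : ℕ → ℕ) : Prop :=
  (∀ m, L m = m % 2) ∨ (∀ m, L m = (m + 1) % 2) ∨
  (∀ m, L m = if m % 4 = 0 ∨ m % 4 = 3 then 0 else 1) ∨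
  (∀ m, L m = if m % 4 = 0 ∨ m % 4 = 3 then 1 else 0)

lemma Good.compl {L L' : ℕ → ℕ} (h : Good L) (h' : ∀ m, L' m = 1 - L m) : Good L' := by
  rcases h with h | h | h | h
  · refine Or.inr (Or.inl fun m => ?_); rw [h' m, h m]; omega
  · refine Or.inl fun m => ?_; rw [h' m, h m]; omega
  · refine Or.inr (Or.inr (Or.inr fun m => ?_)); rw [h' m, h m]
    by_cases hc : m % 4 = 0 ∨ m % 4 = 3 <;> simp [hc]
  · refine Or.inr (Or.inr (Or.inl fun m => ?_)); rw [h' m, h m]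
    by_cases hc : m % 4 = 0 ∨ m % 4 = 3 <;> simp [hc]

def P1 : ℕ → Prop := fun j => pd j = 1
def P0 : ℕ → Prop := fun j => pd j = 0

lemma P1_infinite : (setOf P1).Infinite :=
  Set.infinite_of_injective_forall_mem (f := fun m => 2 * m)
    (fun a b h => by simp only at h; omega) (fun m => pd_two_mul m)

lemma P1_labels : ∀ m, tm (Nat.nth P1 m) = m % 2 := by
  have h0 : Nat.nth P1 0 = 0 := Nat.nth_zero_of_zero (pd_two_mul 0)
  have step : ∀ m, tm (Nat.nth P1 (m + 1)) = 1 - tm (Nat.nth P1 m) := by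
    intro m
    obtain ⟨a, ha⟩ : ∃ a, Nat.nth P1 m = a := ⟨_, rfl⟩
    obtain ⟨b, hb⟩ : ∃ b, Nat.nth P1 (m + 1) = b := ⟨_, rfl⟩
    rw [ha, hb]
    have hpa : pd a = 1 := ha ▸ Nat.nth_mem_of_infinite P1_infinite m
    have hab : a < b := by
      rw [← ha, ← hb]; exact (Nat.nth_lt_nth P1_infinite).mpr (by omega)
    have hgap : ∀ x, a < x → x < b → pd x = 0 := by
      intro x h1 h2
      have hle := pd_le x
      by_contra hc
      have hx : P1 x := by unfold P1; omega
      have := Nat.le_nth_of_lt_nth_succ (p := P1) (k := m) (by rw [hb]; exact h2) hx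
      omega
    have hb2 : b ≤ a + 2 := by
      by_contra hc
      exact pd_no_two_zeros (a + 1)
        ⟨hgap (a + 1) (by omega) (by omega), hgap (a + 2) (by omega) (by omega)⟩
    have t1 := tm_succ a
    have t2 : tm (a + 2) = (tm (a + 1) + pd (a + 1)) % 2 := tm_succ (a + 1)
    have l1 := tm_le a
    have l2 := tm_le (a + 1)
    have l3 := tm_le (a + 2)
    have l4 := pd_le (a + 1)
    rcases (by omega : b = a + 1 ∨ b = a + 2) with rfl | rfl
    · omega
    · have := hgap (a + 1) (by omega) (by omega)
      omega
  intro m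
  induction m with
  | zero => simp [h0, tm]
  | succ m ih => rw [step m, ih]; omega

lemma P0_nth : (∀ m, Nat.nth P0 m = 2 * Nat.nth P1 m + 1) ∧ (setOf P0).Infinite := by
  apply nth_unique
  · intro x y h
    have := (Nat.nth_lt_nth P1_infinite).mpr h
    simp only
    omega
  · intro m
    have hpa : pd (Nat.nth P1 m) = 1 := Nat.nth_mem_of_infinite P1_infinite m
    have := pd_two_mul_add_one (Nat.nth P1 m)
    unfold P0; omega
  · intro x hx
    have hodd := odd_of_pd_eq_zero hx
    obtain ⟨x', rfl⟩ : ∃ x', x = 2 * x' + 1 := ⟨x / 2, by omega⟩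
    have h1 := pd_two_mul_add_one x'
    have h2 := pd_le x'
    have hx' : P1 x' := by unfold P1 P0 at *; omega
    exact ⟨Nat.count P1 x', by rw [Nat.nth_count hx']⟩

lemma P0_labels : ∀ m, tm (Nat.nth P0 m) = (m + 1) % 2 := by
  intro m
  rw [P0_nth.1 m, tm_two_mul_add_one, P1_labels]
  omega

lemma Good.congr {L L' : ℕ → ℕ} (h : Good L) (h' : ∀ m, L' m = L m) : Good L' := by
  rcases h with h | h | h | h
  · exact Or.inl fun m => (h' m).trans (h m)
  · exact Or.inr (Or.inl fun m => (h' m).trans (h m))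
  · exact Or.inr (Or.inr (Or.inl fun m => (h' m).trans (h m)))
  · exact Or.inr (Or.inr (Or.inr fun m => (h' m).trans (h m)))

lemma nth_transfer {p q : ℕ → Prop} (hq : (setOf q).Infinite) (f : ℕ → ℕ) (hf : StrictMono f)
    (hiff : ∀ x, p x ↔ ∃ y, q y ∧ f y = x) :
    (∀ m, Nat.nth p m = f (Nat.nth q m)) ∧ (setOf p).Infinite := by
  apply nth_unique p (fun m => f (Nat.nth q m)) (hf.comp (Nat.nth_strictMono hq))
  · intro m
    exact (hiff _).2 ⟨_, Nat.nth_mem_of_infinite hq m, rfl⟩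
  · intro x hx
    obtain ⟨y, hy, rfl⟩ := (hiff x).1 hx
    exact ⟨Nat.count q y, by simp [Nat.nth_count hy]⟩

/-- four consecutive ones impossible in pd -/
lemma pd_four (x : ℕ) :
    ¬(pd x = 1 ∧ pd (x + 1) = 1 ∧ pd (x + 2) = 1 ∧ pd (x + 3) = 1) := by
  rintro ⟨h0, h1, h2, h3⟩
  rcases Nat.even_or_odd x with ⟨a, ha⟩ | ⟨a, ha⟩
  · have e1 : x + 1 = 2 * a + 1 := by omega
    have e3 : x + 3 = 2 * (a + 1) + 1 := by omega
    rw [e1, pd_two_mul_add_one] at h1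
    rw [e3, pd_two_mul_add_one] at h3
    have := pd_no_two_zeros a
    have := pd_le a; have := pd_le (a + 1)
    omega
  · have e0 : x = 2 * a + 1 := by omega
    have e2 : x + 2 = 2 * (a + 1) + 1 := by omega
    rw [e0, pd_two_mul_add_one] at h0
    rw [e2, pd_two_mul_add_one] at h2
    have := pd_no_two_zeros a
    have := pd_le a; have := pd_le (a + 1)
    omega

/-- occurrence set of the pd-window `pd[i..i+l)` -/
def Docc (i l : ℕ) : ℕ → Prop := fun j => ∀ k < l, pd (j + k) = pd (i + k)

lemma docc_even (i' l : ℕ) (k : ℕ) (hk : k < l) (hk0 : pd (2 * i' + k) = 0) :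
    ∀ x, Docc (2 * i') l x ↔ ∃ y, Docc i' (l / 2) y ∧ 2 * y = x := by
  have hkodd : k % 2 = 1 := by
    have := odd_of_pd_eq_zero hk0; omega
  intro x
  constructor
  · intro h
    have hxe : x % 2 = 0 := by
      by_contra hxo
      have h1 := h k hk
      rw [hk0] at h1
      have := odd_of_pd_eq_zero h1
      omega
    obtain ⟨y, rfl⟩ : ∃ y, x = 2 * y := ⟨x / 2, by omega⟩
    refine ⟨y, fun s hs => ?_, rfl⟩
    have hs2 : 2 * s + 1 < l := by omega
    have h1 := h (2 * s + 1) hs2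
    have e1 : 2 * y + (2 * s + 1) = 2 * (y + s) + 1 := by ring
    have e2 : 2 * i' + (2 * s + 1) = 2 * (i' + s) + 1 := by ring
    rw [e1, e2, pd_two_mul_add_one, pd_two_mul_add_one] at h1
    have := pd_le (y + s); have := pd_le (i' + s)
    omega
  · rintro ⟨y, hy, rfl⟩
    intro k' hk'
    rcases Nat.even_or_odd k' with ⟨s, hs⟩ | ⟨s, hs⟩
    · have e1 : 2 * y + k' = 2 * (y + s) := by omega
      have e2 : 2 * i' + k' = 2 * (i' + s) := by omega
      rw [e1, e2, pd_two_mul, pd_two_mul]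
    · have hs2 : s < l / 2 := by omega
      have h1 := hy s hs2
      have e1 : 2 * y + k' = 2 * (y + s) + 1 := by omega
      have e2 : 2 * i' + k' = 2 * (i' + s) + 1 := by omega
      rw [e1, e2, pd_two_mul_add_one, pd_two_mul_add_one, h1]

lemma docc_odd (i' l : ℕ) (k : ℕ) (hk : k < l) (hk0 : pd (2 * i' + 1 + k) = 0) :
    ∀ x, Docc (2 * i' + 1) l x ↔ ∃ y, Docc i' ((l + 1) / 2) y ∧ 2 * y + 1 = x := by
  have hkev : k % 2 = 0 := by
    have := odd_of_pd_eq_zero hk0; omega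
  intro x
  constructor
  · intro h
    have hxo : x % 2 = 1 := by
      by_contra hxe
      have h1 := h k hk
      rw [hk0] at h1
      have := odd_of_pd_eq_zero h1
      omega
    obtain ⟨y, rfl⟩ : ∃ y, x = 2 * y + 1 := ⟨x / 2, by omega⟩
    refine ⟨y, fun s hs => ?_, rfl⟩
    have hs2 : 2 * s < l := by omega
    have h1 := h (2 * s) hs2
    have e1 : 2 * y + 1 + 2 * s = 2 * (y + s) + 1 := by ring
    have e2 : 2 * i' + 1 + 2 * s = 2 * (i' + s) + 1 := by ring
    rw [e1, e2, pd_two_mul_add_one, pd_two_mul_add_one] at h1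
    have := pd_le (y + s); have := pd_le (i' + s)
    omega
  · rintro ⟨y, hy, rfl⟩
    intro k' hk'
    rcases Nat.even_or_odd k' with ⟨s, hs⟩ | ⟨s, hs⟩
    · have hs2 : s < (l + 1) / 2 := by omega
      have h1 := hy s hs2
      have e1 : 2 * y + 1 + k' = 2 * (y + s) + 1 := by omega
      have e2 : 2 * i' + 1 + k' = 2 * (i' + s) + 1 := by omega
      rw [e1, e2, pd_two_mul_add_one, pd_two_mul_add_one, h1]
    · have e1 : 2 * y + 1 + k' = 2 * (y + s + 1) := by omega
      have e2 : 2 * i' + 1 + k' = 2 * (i' + s + 1) := by omega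
      rw [e1, e2, pd_two_mul, pd_two_mul]

lemma docc_three (i : ℕ) (h0 : pd i = 1) (h1 : pd (i + 1) = 1) (h2 : pd (i + 2) = 1) :
    ∀ x, Docc i 3 x ↔ ∃ y, P0 y ∧ 2 * y = x := by
  intro x
  constructor
  · intro h
    have g0 : pd x = 1 := by have := h 0 (by omega); simpa [h0] using this
    have g1 : pd (x + 1) = 1 := by have := h 1 (by omega); simpa [h1] using this
    have g2 : pd (x + 2) = 1 := by have := h 2 (by omega); simpa [h2] using this
    rcases Nat.even_or_odd x with ⟨y, hy⟩ | ⟨y, hy⟩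
    · refine ⟨y, ?_, by omega⟩
      have e1 : x + 1 = 2 * y + 1 := by omega
      rw [e1, pd_two_mul_add_one] at g1
      have := pd_le y
      unfold P0; omega
    · exfalso
      have e0 : x = 2 * y + 1 := by omega
      have e2 : x + 2 = 2 * (y + 1) + 1 := by omega
      rw [e0, pd_two_mul_add_one] at g0
      rw [e2, pd_two_mul_add_one] at g2
      have := pd_le y; have := pd_le (y + 1)
      exact pd_no_two_zeros y ⟨by omega, by omega⟩
  · rintro ⟨y, hy, rfl⟩
    have hy0 : pd y = 0 := hy
    intro k hk
    interval_cases k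
    · simp only [Nat.add_zero]; rw [pd_two_mul, h0]
    · rw [pd_two_mul_add_one, hy0, h1]
    · rw [show (2 * y + 2 : ℕ) = 2 * (y + 1) from by ring, pd_two_mul, h2]

lemma docc_pair (i : ℕ) (h0 : pd i = 1) (h1 : pd (i + 1) = 1) :
    (∀ m, Nat.nth (Docc i 2) m = 2 * Nat.nth P0 (m / 2) + m % 2) ∧
      (setOf (Docc i 2)).Infinite := by
  have hZ := P0_nth.2
  apply nth_unique
  · apply strictMono_nat_of_lt_succ
    intro m
    rcases Nat.even_or_odd m with ⟨r, hr⟩ | ⟨r, hr⟩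
    · have e1 : m / 2 = r := by omega
      have e2 : (m + 1) / 2 = r := by omega
      rw [e1, e2]; omega
    · have e1 : m / 2 = r := by omega
      have e2 : (m + 1) / 2 = r + 1 := by omega
      have hlt : Nat.nth P0 r < Nat.nth P0 (r + 1) := (Nat.nth_lt_nth hZ).mpr (by omega)
      rw [e1, e2]; omega
  · intro m
    show Docc i 2 _
    have hz : pd (Nat.nth P0 (m / 2)) = 0 := Nat.nth_mem_of_infinite hZ _
    intro k hk
    rcases (by omega : m % 2 = 0 ∨ m % 2 = 1) with hm | hm <;> rw [hm] <;> interval_cases k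
    · simp only [Nat.add_zero]; rw [pd_two_mul, h0]
    · simp only [Nat.add_zero]; rw [pd_two_mul_add_one, hz, h1]
    · simp only [Nat.add_zero]; rw [pd_two_mul_add_one, hz, h0]
    · rw [show 2 * Nat.nth P0 (m / 2) + 1 + 1 = 2 * (Nat.nth P0 (m / 2) + 1) from by ring,
        pd_two_mul, h1]
  · intro x hx
    have g0 : pd x = 1 := by
      have := hx 0 (by omega); simp only [Nat.add_zero] at this; omega
    have g1 : pd (x + 1) = 1 := by
      have := hx 1 (by omega); omega
    rcases Nat.even_or_odd x with ⟨x', hx'⟩ | ⟨x', hx'⟩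
    · have e : x + 1 = 2 * x' + 1 := by omega
      rw [e, pd_two_mul_add_one] at g1
      have hp : P0 x' := by have := pd_le x'; show pd x' = 0; omega
      refine ⟨2 * Nat.count P0 x', ?_⟩
      have e1 : 2 * Nat.count P0 x' / 2 = Nat.count P0 x' := by omega
      have e2 : 2 * Nat.count P0 x' % 2 = 0 := by omega
      rw [e1, e2, Nat.nth_count hp]
      omega
    · have e : x = 2 * x' + 1 := by omega
      rw [e, pd_two_mul_add_one] at g0
      have hp : P0 x' := by have := pd_le x'; show pd x' = 0; omega
      refine ⟨2 * Nat.count P0 x' + 1, ?_⟩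
      have e1 : (2 * Nat.count P0 x' + 1) / 2 = Nat.count P0 x' := by omega
      have e2 : (2 * Nat.count P0 x' + 1) % 2 = 1 := by omega
      rw [e1, e2, Nat.nth_count hp]
      omega

lemma docc_main : ∀ l, 1 ≤ l → ∀ i,
    (setOf (Docc i l)).Infinite ∧ Good (fun m => tm (Nat.nth (Docc i l) m)) := by
  intro l
  induction l using Nat.strong_induction_on with
  | _ l ih =>
    intro hl i
    by_cases hz : ∃ k, k < l ∧ pd (i + k) = 0
    · obtain ⟨k, hkl, hk0⟩ := hz
      rcases Nat.lt_or_ge l 2 with hl2 | hl2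
      · -- l = 1, pd i = 0
        have hk' : k = 0 := by omega
        have hl1 : l = 1 := by omega
        subst hl1; subst hk'
        have hi0 : pd i = 0 := by simpa using hk0
        have hpred : Docc i 1 = P0 := by
          funext j; apply propext
          constructor
          · intro h
            have := h 0 (by omega)
            simp only [Nat.add_zero] at this
            show pd j = 0; omega
          · intro hj k' hk'
            have hk0' : k' = 0 := by omega
            subst hk0'
            simp only [Nat.add_zero]
            have : pd j = 0 := hj
            omega
        rw [hpred]
        exact ⟨P0_nth.2, Or.inr (Or.inl P0_labels)⟩
      · rcases (by omega : i % 2 = 0 ∨ i % 2 = 1) with hi | hi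
        · obtain ⟨i', rfl⟩ : ∃ i', i = 2 * i' := ⟨i / 2, by omega⟩
          have hiff := docc_even i' l k hkl hk0
          obtain ⟨hinf', hgood'⟩ := ih (l / 2) (by omega) (by omega) i'
          obtain ⟨hnth, hinf⟩ := nth_transfer hinf' (fun y => 2 * y)
            (fun a b h => by simp only; omega) (fun x => hiff x)
          refine ⟨hinf, Good.congr hgood' ?_⟩
          intro m
          rw [hnth m]
          exact tm_two_mul _
        · obtain ⟨i', rfl⟩ : ∃ i', i = 2 * i' + 1 := ⟨i / 2, by omega⟩
          have hiff := docc_odd i' l k hkl hk0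
          obtain ⟨hinf', hgood'⟩ := ih ((l + 1) / 2) (by omega) (by omega) i'
          obtain ⟨hnth, hinf⟩ := nth_transfer hinf' (fun y => 2 * y + 1)
            (fun a b h => by simp only; omega) (fun x => hiff x)
          refine ⟨hinf, Good.compl hgood' ?_⟩
          intro m
          rw [hnth m]
          exact tm_two_mul_add_one _
    · push_neg at hz
      have hone : ∀ k, k < l → pd (i + k) = 1 := by
        intro k hk
        have := pd_le (i + k)
        have := hz k hk
        omega
      rcases (by omega : l = 1 ∨ l = 2 ∨ l = 3 ∨ 4 ≤ l) with rfl | rfl | rfl | h4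
      · have hi1 : pd i = 1 := by simpa using hone 0 (by omega)
        have hpred : Docc i 1 = P1 := by
          funext j; apply propext
          constructor
          · intro h
            have := h 0 (by omega)
            simp only [Nat.add_zero] at this
            show pd j = 1; omega
          · intro hj k' hk'
            have hk0' : k' = 0 := by omega
            subst hk0'
            simp only [Nat.add_zero]
            have : pd j = 1 := hj
            omega
        rw [hpred]
        exact ⟨P1_infinite, Or.inl P1_labels⟩
      · have h0 : pd i = 1 := by simpa using hone 0 (by omega)
        have h1 : pd (i + 1) = 1 := hone 1 (by omega)
        obtain ⟨hnth, hinf⟩ := docc_pair i h0 h1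
        refine ⟨hinf, Or.inr (Or.inr (Or.inr ?_))⟩
        intro m
        simp only
        rw [hnth m]
        rcases (by omega : m % 2 = 0 ∨ m % 2 = 1) with hm | hm
        · rw [hm, Nat.add_zero, tm_two_mul, P0_labels]
          split_ifs with hc <;> omega
        · rw [hm, tm_two_mul_add_one, P0_labels]
          have : (m / 2 + 1) % 2 ≤ 1 := by omega
          split_ifs with hc <;> omega
      · have h0 : pd i = 1 := by simpa using hone 0 (by omega)
        have h1 : pd (i + 1) = 1 := hone 1 (by omega)
        have h2 : pd (i + 2) = 1 := hone 2 (by omega)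
        have hiff := docc_three i h0 h1 h2
        obtain ⟨hnth, hinf⟩ := nth_transfer P0_nth.2 (fun y => 2 * y)
          (fun a b h => by simp only; omega) (fun x => hiff x)
        refine ⟨hinf, Or.inr (Or.inl ?_)⟩
        intro m
        simp only
        rw [hnth m]
        have := tm_two_mul (Nat.nth P0 m)
        show tm (2 * Nat.nth P0 m) = _
        rw [this, P0_labels]
      · exfalso
        refine pd_four i ⟨by simpa using hone 0 (by omega), hone 1 (by omega),
          hone 2 (by omega), hone 3 (by omega)⟩


lemma docc_feq {i n j : ℕ} (hn : 1 ≤ n) (h : Docc i (n - 1) j) (htm : tm j = tm i) :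
    feq i j n := by
  have aux : ∀ k, k < n → tm (j + k) = tm (i + k) := by
    intro k
    induction k with
    | zero => intro _; simpa using htm
    | succ k ihk =>
      intro hk
      have hpd := h k (by omega)
      have t1 : tm (j + k + 1) = (tm (j + k) + pd (j + k)) % 2 := tm_succ _
      have t2 : tm (i + k + 1) = (tm (i + k) + pd (i + k)) % 2 := tm_succ _
      have he := ihk (by omega)
      show tm (j + k + 1) = tm (i + k + 1)
      omega
  exact fun k hk => aux k hk

lemma docc_feqc {i n j : ℕ} (hn : 1 ≤ n) (h : Docc i (n - 1) j) (htm : tm j = 1 - tm i) :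
    feqc i j n := by
  have aux : ∀ k, k < n → tm (j + k) = 1 - tm (i + k) := by
    intro k
    induction k with
    | zero => intro _; simpa using htm
    | succ k ihk =>
      intro hk
      have hpd := h k (by omega)
      have t1 : tm (j + k + 1) = (tm (j + k) + pd (j + k)) % 2 := tm_succ _
      have t2 : tm (i + k + 1) = (tm (i + k) + pd (i + k)) % 2 := tm_succ _
      have he := ihk (by omega)
      have b1 := tm_le (i + k)
      have b2 := tm_le (i + k + 1)
      have b3 := tm_le (j + k)
      have b4 := pd_le (i + k)
      show tm (j + k + 1) = 1 - tm (i + k + 1)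
      omega
  exact fun k hk => aux k hk

lemma occ_iff (i n : ℕ) (hn : 1 ≤ n) : occSet i n = Docc i (n - 1) := by
  funext j; apply propext
  constructor
  · rintro (h | h) <;> intro k hk
    · have e1 : tm (j + k) = tm (i + k) := h k (by omega)
      have e2 : tm (j + k + 1) = tm (i + k + 1) := h (k + 1) (by omega)
      unfold pd
      omega
    · have e1 : tm (j + k) = 1 - tm (i + k) := h k (by omega)
      have e2 : tm (j + k + 1) = 1 - tm (i + k + 1) := h (k + 1) (by omega)
      have b1 := tm_le (i + k)
      have b2 := tm_le (i + k + 1)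
      unfold pd
      omega
  · intro h
    by_cases htm : tm j = tm i
    · exact Or.inl (docc_feq hn h htm)
    · have htm' : tm j = 1 - tm i := by
        have := tm_le j; have := tm_le i; omega
      exact Or.inr (docc_feqc hn h htm')

/-- Main theorem: for every factor of the Thue-Morse word of length at least 2,
the intertwining sequence is one of (AB)^ω, (BA)^ω, (ABBA)^ω, (BAAB)^ω. -/
theorem tm_intertwining_main (i n : ℕ) (hn : 2 ≤ n) :
    ABpat i n ∨ BApat i n ∨ ABBApat i n ∨ BAABpat i n := by
  have hpred := occ_iff i n (by omega)
  obtain ⟨hinf, hgood⟩ := docc_main (n - 1) (by omega) i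
  have hitw : ∀ m, itw i n m =
      if tm (Nat.nth (Docc i (n - 1)) m) = tm i then 0 else 1 := by
    intro m
    unfold itw
    rw [hpred]
    have hj : Docc i (n - 1) (Nat.nth (Docc i (n - 1)) m) := Nat.nth_mem_of_infinite hinf m
    by_cases htm : tm (Nat.nth (Docc i (n - 1)) m) = tm i
    · rw [if_pos (docc_feq (by omega) hj htm), if_pos htm]
    · rw [if_neg (fun hf => htm (by simpa using hf 0 (by omega))), if_neg htm]
  have hG : Good (fun m => itw i n m) := by
    rcases (by have := tm_le i; omega : tm i = 0 ∨ tm i = 1) with h | h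
    · apply Good.congr hgood
      intro m
      rw [hitw m, h]
      have := tm_le (Nat.nth (Docc i (n - 1)) m)
      split_ifs with hc <;> omega
    · apply Good.compl hgood
      intro m
      rw [hitw m, h]
      have := tm_le (Nat.nth (Docc i (n - 1)) m)
      split_ifs with hc <;> omega
  rcases hG with h | h | h | h
  · exact Or.inl fun m => h m
  · exact Or.inr (Or.inl fun m => h m)
  · exact Or.inr (Or.inr (Or.inl fun m => h m))
  · exact Or.inr (Or.inr (Or.inr fun m => h m))
end
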